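/- arXiv:2511.20664 — 3 statements merged into one kernel-verified Lean document; each statement's English description precedes it below -/
import Mathlib

section
/- Let ε > 0 and Δt > 0 be real numbers, and let M, fⁿ, f⋆, fⁿ⁺¹ be real numbers satisfying the two TR-BDF2 stage equations f⋆ = fⁿ + (Δt/(4ε))·(2M − fⁿ − f⋆) and 3·fⁿ⁺¹ − 4·f⋆ + fⁿ = (Δt/ε)·(M − fⁿ⁺¹). Then fⁿ⁺¹ = θ·M + (1 − θ)·fⁿ, where θ = Δt·(Δt + 12ε) / ((Δt + 3ε)·(Δt + 4ε)). -/
theorem trbdf2_collision_update (ε Δt : ℝ) (hε : 0 < ε) (hΔt : 0 < Δt)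
    (M fn fs fnp1 : ℝ)
    (hstage1 : fs = fn + (Δt / (4 * ε)) * (2 * M - fn - fs))
    (hstage2 : 3 * fnp1 - 4 * fs + fn = (Δt / ε) * (M - fnp1)) :
    fnp1 = (Δt * (Δt + 12 * ε) / ((Δt + 3 * ε) * (Δt + 4 * ε))) * M
      + (1 - Δt * (Δt + 12 * ε) / ((Δt + 3 * ε) * (Δt + 4 * ε))) * fn := by
  have hε' : ε ≠ 0 := hε.ne'
  have h3 : Δt + 3 * ε ≠ 0 := by positivity
  have h4 : Δt + 4 * ε ≠ 0 := by positivity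
  field_simp at hstage1 hstage2 ⊢
  nlinarith [hstage1, hstage2, sq_nonneg (Δt+ε), mul_pos hΔt hε]
end

section
/- Let ε > 0 and Δt > 0 be real numbers and let θ = Δt·(Δt + 12ε) / ((Δt + 3ε)·(Δt + 4ε)). Then 0 < θ < 2; equivalently, the TR-BDF2 amplification factor 1 − θ satisfies |1 − θ| < 1 for all positive ε and Δt, so the collision update fⁿ⁺¹ = θM + (1 − θ)fⁿ is unconditionally stable. -/
theorem trbdf2_theta_stable (ε Δt : ℝ) (hε : 0 < ε) (hΔt : 0 < Δt)
    (θ : ℝ) (hθ : θ = Δt * (Δt + 12 * ε) / ((Δt + 3 * ε) * (Δt + 4 * ε))) :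
    0 < θ ∧ θ < 2 ∧ |1 - θ| < 1 := by
  have hd : 0 < (Δt + 3 * ε) * (Δt + 4 * ε) := by positivity
  have h1 : 0 < θ := by rw [hθ]; positivity
  have h2 : θ < 2 := by
    rw [hθ, div_lt_iff₀ hd]; nlinarith
  refine ⟨h1, h2, ?_⟩
  rw [abs_lt]; constructor <;> linarith
end

section
/- Fix Δt > 0 and define θ(ε) = Δt·(Δt + 12ε) / ((Δt + 3ε)·(Δt + 4ε)) for ε > 0. Then θ(ε) → 1 as ε → 0⁺; consequently, in the limit of vanishing Knudsen number the TR-BDF2 collision update fⁿ⁺¹ = θM + (1 − θ)fⁿ projects the distribution onto the Maxwellian (the asymptotic-preserving property). -/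
open Filter Topology

theorem trbdf2_asymptotic_preserving (Δt : ℝ) (hΔt : 0 < Δt) :
    Tendsto (fun ε : ℝ => Δt * (Δt + 12 * ε) / ((Δt + 3 * ε) * (Δt + 4 * ε)))
      (nhdsWithin 0 (Set.Ioi 0)) (nhds 1) := by
  have hc : ContinuousAt (fun ε : ℝ => Δt * (Δt + 12 * ε) / ((Δt + 3 * ε) * (Δt + 4 * ε))) 0 := by
    apply ContinuousAt.div
    · fun_prop
    · fun_prop
    · simp; positivity
  have := hc.continuousWithinAt (s := Set.Ioi 0)
  have h0 : Δt * (Δt + 12 * 0) / ((Δt + 3 * 0) * (Δt + 4 * 0)) = 1 := by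
    field_simp
    ring
  rw [show (1:ℝ) = Δt * Δt / (Δt * Δt) by field_simp]
  simpa [ContinuousWithinAt] using this
end
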